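/- The 4×4 rook's graph is not isomorphic to the Shrikhande graph. -/

import Mathlib

/-- The 4×4 rook's graph on `ZMod 4 × ZMod 4`: two distinct vertices are adjacent
iff they agree in the first coordinate or agree in the second coordinate. -/
def rookGraph : SimpleGraph (ZMod 4 × ZMod 4) where
  Adj u v := u ≠ v ∧ (u.1 = v.1 ∨ u.2 = v.2)
  symm := by
    constructor
    rintro u v ⟨hne, h⟩
    exact ⟨hne.symm, by tauto⟩
  loopless := by
    constructor
    rintro u ⟨hne, -⟩
    exact hne rfl

/-- The connection set of the Shrikhande graph. -/
def shrikhandeSet : Finset (ZMod 4 × ZMod 4) :=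
  {(1, 0), (3, 0), (0, 1), (0, 3), (1, 1), (3, 3)}

/-- The Shrikhande graph on `ZMod 4 × ZMod 4`: `u` and `v` are adjacent iff
`u - v` lies in the set {(1,0),(3,0),(0,1),(0,3),(1,1),(3,3)}. -/
def shrikhandeGraph : SimpleGraph (ZMod 4 × ZMod 4) where
  Adj u v := u - v ∈ shrikhandeSet
  symm := by
    constructor
    intro u v h
    have key : ∀ w : ZMod 4 × ZMod 4, w ∈ shrikhandeSet → -w ∈ shrikhandeSet := by decide
    have := key _ h
    rwa [neg_sub] at this
  loopless := by
    constructor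
    intro u h
    rw [sub_self] at h
    revert h
    decide


/-!
In the rook's graph every row is a 4-clique. The Shrikhande graph has no 4-clique: it is
invariant under translations, so a 4-clique may be assumed to contain `0`, and then its other
three vertices would form a triangle in the neighbourhood `shrikhandeSet` of `0`, which induces a
hexagon.
-/

open Finset SimpleGraph

theorem rookGraph_isNClique_row (a : ZMod 4) :
    rookGraph.IsNClique 4 (univ.map ⟨Prod.mk a, Prod.mk_right_injective a⟩) := by
  refine ⟨?_, by simp⟩
  intro x hx y hy hxy
  obtain ⟨i, -, rfl⟩ := mem_map.1 (mem_coe.1 hx)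
  obtain ⟨j, -, rfl⟩ := mem_map.1 (mem_coe.1 hy)
  exact ⟨hxy, Or.inl rfl⟩

theorem rookGraph_not_cliqueFree_four : ¬ rookGraph.CliqueFree 4 :=
  fun h ↦ h _ (rookGraph_isNClique_row 0)

instance : DecidableRel shrikhandeGraph.Adj :=
  fun u v ↦ inferInstanceAs (Decidable (u - v ∈ shrikhandeSet))

theorem shrikhandeGraph_adj_sub_right_iff {u v : ZMod 4 × ZMod 4} (w : ZMod 4 × ZMod 4) :
    shrikhandeGraph.Adj (u - w) (v - w) ↔ shrikhandeGraph.Adj u v := by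
  change u - w - (v - w) ∈ shrikhandeSet ↔ u - v ∈ shrikhandeSet
  rw [sub_sub_sub_cancel_right]

theorem shrikhandeSet_triangle_free :
    ∀ x ∈ shrikhandeSet, ∀ y ∈ shrikhandeSet, ∀ z ∈ shrikhandeSet,
      shrikhandeGraph.Adj x y → shrikhandeGraph.Adj x z → ¬ shrikhandeGraph.Adj y z := by
  decide

theorem shrikhandeGraph_cliqueFree_four : shrikhandeGraph.CliqueFree 4 := by
  intro s hs
  obtain ⟨a, t, ha, rfl, ht⟩ := card_eq_succ.1 hs.card_eq
  obtain ⟨b, c, d, hbc, hbd, hcd, rfl⟩ :=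
    is3Clique_iff.1 ⟨hs.isClique.subset (subset_insert a _), ht⟩
  have mem_nbhd : ∀ x ∈ ({b, c, d} : Finset _), x - a ∈ shrikhandeSet := fun x hx ↦
    hs.isClique (mem_insert_of_mem hx) (mem_insert_self a _) (ne_of_mem_of_not_mem hx ha)
  have translate {u v} := (shrikhandeGraph_adj_sub_right_iff (u := u) (v := v) a).2
  exact shrikhandeSet_triangle_free _ (mem_nbhd b (by simp)) _ (mem_nbhd c (by simp))
    _ (mem_nbhd d (by simp)) (translate hbc) (translate hbd) (translate hcd)

/-- The 4×4 rook's graph is not isomorphic to the Shrikhande graph. -/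
theorem rookGraph_not_iso_shrikhandeGraph : ¬ Nonempty (rookGraph ≃g shrikhandeGraph) := by
  rintro ⟨f⟩
  exact rookGraph_not_cliqueFree_four (shrikhandeGraph_cliqueFree_four.comap f.isContained)
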